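/- arXiv:0807.2030 — 3 statements merged into one kernel-verified Lean document; each statement's English description precedes it below -/
import Mathlib

section
/- For a lattice L in ℝ^n, the minimal norm function L ↦ min{‖x‖² : x ∈ L, x ≠ 0} is continuous on the space of lattices with the Chabauty topology. -/
open TopologicalSpace MeasureTheory
open Topology

/-- The Chabauty topology on the space of closed subsets of `X`, generated by the sets
`O_K = {F | F ∩ K = ∅}` for `K` compact and `O'_U = {F | F ∩ U ≠ ∅}` for `U` open. -/
def chabautyTopology (X : Type*) [TopologicalSpace X] :
    TopologicalSpace (Closeds X) :=
  TopologicalSpace.generateFrom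
    ({S | ∃ K : Set X, IsCompact K ∧ S = {F : Closeds X | (F : Set X) ∩ K = ∅}} ∪
     {S | ∃ U : Set X, IsOpen U ∧ S = {F : Closeds X | ((F : Set X) ∩ U).Nonempty}})

/-- A lattice in `ℝ^n`: a discrete subgroup generated by a basis, i.e. spanning `ℝ^n`. -/
noncomputable def LatticeIn (n : ℕ) :=
  {L : Submodule ℤ (EuclideanSpace ℝ (Fin n)) //
    DiscreteTopology L ∧ Submodule.span ℝ (L : Set (EuclideanSpace ℝ (Fin n))) = ⊤}

noncomputable def LatticeIn.toCloseds {n : ℕ} (L : LatticeIn n) :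
    Closeds (EuclideanSpace ℝ (Fin n)) :=
  ⟨L.1, by
    have : DiscreteTopology L.1.toAddSubgroup := L.2.1
    exact AddSubgroup.isClosed_of_discrete (H := L.1.toAddSubgroup)⟩

/-- The Chabauty topology on the space of lattices in `ℝ^n`. -/
noncomputable instance (n : ℕ) : TopologicalSpace (LatticeIn n) :=
  (chabautyTopology (EuclideanSpace ℝ (Fin n))).induced LatticeIn.toCloseds

/-- The minimal norm `min {‖x‖² : x ∈ L, x ≠ 0}` of a lattice. -/
noncomputable def LatticeIn.minNorm {n : ℕ} (L : LatticeIn n) : ℝ :=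
  sInf ((fun x : EuclideanSpace ℝ (Fin n) => ‖x‖ ^ 2) '' ((L.1 : Set _) \ {0}))


lemma LatticeIn.exists_ne_zero {n : ℕ} (hn : 0 < n) (L : LatticeIn n) :
    ∃ x, x ∈ L.1 ∧ x ≠ 0 := by
  by_contra h
  push_neg at h
  haveI : Nonempty (Fin n) := ⟨⟨0, hn⟩⟩
  haveI : Nontrivial (EuclideanSpace ℝ (Fin n)) := inferInstance
  obtain ⟨y, hy⟩ := exists_ne (0 : EuclideanSpace ℝ (Fin n))
  have hsub : (L.1 : Set (EuclideanSpace ℝ (Fin n))) ⊆ {0} := fun x hx => h x hx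
  have hle : Submodule.span ℝ (L.1 : Set (EuclideanSpace ℝ (Fin n))) ≤ ⊥ := by
    rw [Submodule.span_le]
    simpa using hsub
  rw [L.2.2] at hle
  exact hy (by simpa using hle (Submodule.mem_top (x := y)))

lemma LatticeIn.finite_inter {n : ℕ} (L : LatticeIn n) (r : ℝ) :
    ((L.1 : Set (EuclideanSpace ℝ (Fin n))) ∩ Metric.closedBall 0 r).Finite := by
  haveI hd : DiscreteTopology (L.1 : Set (EuclideanSpace ℝ (Fin n))) := L.2.1
  have hc : IsClosed (L.1 : Set (EuclideanSpace ℝ (Fin n))) := L.toCloseds.2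
  have hcpt : IsCompact ((L.1 : Set (EuclideanSpace ℝ (Fin n))) ∩ Metric.closedBall 0 r) :=
    (isCompact_closedBall 0 r).inter_left hc
  haveI : DiscreteTopology
      ((L.1 : Set (EuclideanSpace ℝ (Fin n))) ∩ Metric.closedBall 0 r : Set _) :=
    DiscreteTopology.of_subset hd Set.inter_subset_left
  exact hcpt.finite (isDiscrete_iff_discreteTopology.mpr this)

lemma LatticeIn.exists_isLeast {n : ℕ} (hn : 0 < n) (L : LatticeIn n) :
    ∃ x, x ∈ L.1 ∧ x ≠ 0 ∧
      IsLeast ((fun x : EuclideanSpace ℝ (Fin n) => ‖x‖ ^ 2) ''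
        ((L.1 : Set _) \ {0})) (‖x‖ ^ 2) := by
  obtain ⟨x0, hx0, hx0ne⟩ := L.exists_ne_zero hn
  set S := ((L.1 : Set (EuclideanSpace ℝ (Fin n))) \ {0}) ∩ Metric.closedBall 0 ‖x0‖ with hS
  have hSfin : S.Finite := (L.finite_inter ‖x0‖).subset
    (Set.inter_subset_inter_left _ Set.diff_subset)
  have hSne : S.Nonempty := ⟨x0, ⟨hx0, hx0ne⟩, by simp⟩
  obtain ⟨x, hxS, hxmin⟩ := Set.exists_min_image S (fun y => ‖y‖) hSfin hSne
  refine ⟨x, hxS.1.1, hxS.1.2, ⟨⟨x, hxS.1, rfl⟩, ?_⟩⟩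
  rintro _ ⟨z, hz, rfl⟩
  rcases le_or_gt ‖z‖ ‖x0‖ with hle | hlt
  · have : z ∈ S := ⟨hz, by simpa using hle⟩
    exact pow_le_pow_left₀ (norm_nonneg _) (hxmin z this) 2
  · have h1 : ‖x‖ ≤ ‖x0‖ := by simpa using (hxS.2 : x ∈ Metric.closedBall 0 ‖x0‖)
    exact pow_le_pow_left₀ (norm_nonneg _) (h1.trans hlt.le) 2

lemma LatticeIn.minNorm_le {n : ℕ} (L : LatticeIn n) {y : EuclideanSpace ℝ (Fin n)}
    (hy : y ∈ L.1) (hy0 : y ≠ 0) : L.minNorm ≤ ‖y‖ ^ 2 := by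
  apply csInf_le
  · exact ⟨0, by rintro _ ⟨z, _, rfl⟩; positivity⟩
  · exact ⟨y, ⟨hy, hy0⟩, rfl⟩

lemma LatticeIn.le_minNorm {n : ℕ} (hn : 0 < n) (L : LatticeIn n) {c : ℝ}
    (hc : ∀ y ∈ L.1, y ≠ 0 → c ≤ ‖y‖ ^ 2) : c ≤ L.minNorm := by
  obtain ⟨x0, hx0, hx0ne⟩ := L.exists_ne_zero hn
  refine le_csInf ⟨‖x0‖ ^ 2, ⟨x0, ⟨hx0, hx0ne⟩, rfl⟩⟩ ?_
  rintro _ ⟨z, hz, rfl⟩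
  exact hc z hz.1 hz.2

lemma LatticeIn.minNorm_nonneg {n : ℕ} (hn : 0 < n) (L : LatticeIn n) :
    0 ≤ L.minNorm :=
  L.le_minNorm hn fun y _ _ => by positivity

lemma isOpen_chab {n : ℕ} {K U : Set (EuclideanSpace ℝ (Fin n))}
    (hK : IsCompact K) (hU : IsOpen U) :
    IsOpen {L : LatticeIn n | (L.1 : Set _) ∩ K = ∅ ∧ ((L.1 : Set _) ∩ U).Nonempty} := by
  letI t := chabautyTopology (EuclideanSpace ℝ (Fin n))
  have h1 : IsOpen[t] {F : Closeds (EuclideanSpace ℝ (Fin n)) | (F : Set _) ∩ K = ∅} :=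
    isOpen_generateFrom_of_mem (Or.inl ⟨K, hK, rfl⟩)
  have h2 : IsOpen[t] {F : Closeds (EuclideanSpace ℝ (Fin n)) | ((F : Set _) ∩ U).Nonempty} :=
    isOpen_generateFrom_of_mem (Or.inr ⟨U, hU, rfl⟩)
  have h3 : IsOpen[t] ({F : Closeds (EuclideanSpace ℝ (Fin n)) | (F : Set _) ∩ K = ∅} ∩
      {F | ((F : Set _) ∩ U).Nonempty}) := h1.inter h2
  exact isOpen_induced_iff.mpr ⟨_, h3, rfl⟩

/-- The minimal norm function is continuous on the space of lattices in `ℝ^n`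
with the Chabauty topology. -/
theorem minNorm_continuous (n : ℕ) :
    Continuous (fun L : LatticeIn n => L.minNorm) := by
  rcases Nat.eq_zero_or_pos n with hn | hn
  · subst hn
    haveI : Subsingleton (EuclideanSpace ℝ (Fin 0)) :=
      ⟨fun a b => PiLp.ext fun i => absurd i.2 (by omega)⟩
    exact continuous_of_const fun a b => congrArg LatticeIn.minNorm
      (Subtype.ext (Subsingleton.elim _ _))
  rw [continuous_iff_continuousAt]
  intro L
  rw [ContinuousAt, Metric.tendsto_nhds]
  intro ε hε
  obtain ⟨x, hxL, hx0, hleast⟩ := L.exists_isLeast hn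
  have hm : L.minNorm = ‖x‖ ^ 2 := hleast.csInf_eq
  set m := L.minNorm with hmdef
  have hxnorm : 0 < ‖x‖ := norm_pos_iff.mpr hx0
  have hmpos : 0 < m := by rw [hm]; positivity
  -- ball for the upper bound
  set δ : ℝ := min ‖x‖ (ε / (3 * ‖x‖ + 1)) with hδ
  have hδpos : 0 < δ := lt_min hxnorm (by positivity)
  have hδx : δ ≤ ‖x‖ := min_le_left _ _
  set U : Set (EuclideanSpace ℝ (Fin n)) := Metric.ball x δ with hUdef
  have hUo : IsOpen U := Metric.isOpen_ball
  have hxU : x ∈ U := by simpa [hUdef, Metric.mem_ball] using hδpos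
  -- upper bound: any lattice meeting U has small minNorm
  have upper : ∀ L' : LatticeIn n, ((L'.1 : Set _) ∩ U).Nonempty → L'.minNorm < m + ε := by
    intro L' ⟨y, hyL, hyU⟩
    have hyx : dist y x < δ := by simpa [hUdef, Metric.mem_ball] using hyU
    have hy0 : y ≠ 0 := by
      rintro rfl
      rw [dist_comm, dist_zero_right] at hyx
      exact absurd hyx (not_lt.mpr hδx)
    have hynorm : ‖y‖ < ‖x‖ + δ := by
      calc ‖y‖ ≤ ‖x‖ + ‖y - x‖ := by
              have := norm_add_le x (y - x); simpa using this
        _ < ‖x‖ + δ := by rw [dist_eq_norm] at hyx; linarith [hyx]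
    have h1 : L'.minNorm ≤ ‖y‖ ^ 2 := L'.minNorm_le hyL hy0
    have hδε : δ ≤ ε / (3 * ‖x‖ + 1) := min_le_right _ _
    have h2 : ‖y‖ ^ 2 < (‖x‖ + δ) ^ 2 :=
      pow_lt_pow_left₀ hynorm (norm_nonneg _) two_ne_zero
    have h3 : δ * (3 * ‖x‖ + 1) ≤ ε := (le_div_iff₀ (by positivity)).mp hδε
    have h4 : δ * δ ≤ δ * ‖x‖ := mul_le_mul_of_nonneg_left hδx hδpos.le
    nlinarith [norm_nonneg y, hm, h3, h4, hδpos, hxnorm]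
  rcases le_or_gt m (ε / 2) with hcase | hcase
  · -- small minimum: use K = ∅
    have hopen := isOpen_chab (n := n) isCompact_empty hUo
    refine Filter.mem_of_superset (hopen.mem_nhds ⟨by simp, ⟨x, hxL, hxU⟩⟩) ?_
    intro L' hL'
    have h1 := upper L' hL'.2
    have h2 := L'.minNorm_nonneg hn
    simp only [Set.mem_setOf_eq, Real.dist_eq, abs_lt]
    constructor <;> [linarith; linarith]
  · -- large minimum: use an annulus
    set b : ℝ := Real.sqrt (m - ε / 2) with hb
    have hmε : 0 < m - ε / 2 := by linarith
    have hbpos : 0 < b := Real.sqrt_pos.mpr hmε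
    have hbsq : b ^ 2 = m - ε / 2 := Real.sq_sqrt hmε.le
    set a : ℝ := b / 2 with ha
    have hapos : 0 < a := by positivity
    set K : Set (EuclideanSpace ℝ (Fin n)) :=
      Metric.closedBall 0 b ∩ (Metric.ball 0 a)ᶜ with hKdef
    have hKc : IsCompact K :=
      (isCompact_closedBall 0 b).inter_right Metric.isOpen_ball.isClosed_compl
    have hmemK : ∀ y : EuclideanSpace ℝ (Fin n), y ∈ K ↔ a ≤ ‖y‖ ∧ ‖y‖ ≤ b := by
      intro y
      simp [hKdef, Metric.mem_closedBall, Metric.mem_ball, dist_zero_right, not_lt, and_comm]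
    have hLK : (L.1 : Set _) ∩ K = ∅ := by
      rw [Set.eq_empty_iff_forall_notMem]
      rintro y ⟨hyL, hyK⟩
      rw [hmemK] at hyK
      have hy0 : y ≠ 0 := by
        rintro rfl
        simp at hyK
        linarith [hyK.1]
      have h1 : m ≤ ‖y‖ ^ 2 := L.minNorm_le hyL hy0
      have h2 : ‖y‖ ^ 2 ≤ b ^ 2 := pow_le_pow_left₀ (norm_nonneg _) hyK.2 2
      linarith
    have hopen := isOpen_chab (n := n) hKc hUo
    refine Filter.mem_of_superset (hopen.mem_nhds ⟨hLK, ⟨x, hxL, hxU⟩⟩) ?_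
    rintro L' ⟨hK', hU'⟩
    have h1 := upper L' hU'
    -- lower bound: every nonzero vector of L' has norm > b
    have lower : m - ε / 2 ≤ L'.minNorm := by
      apply L'.le_minNorm hn
      intro y hyL hy0
      have hnotK : ∀ z : EuclideanSpace ℝ (Fin n), z ∈ L'.1 → z ∉ K := by
        intro z hz hzK
        exact Set.eq_empty_iff_forall_notMem.mp hK' z ⟨hz, hzK⟩
      have hynorm : 0 < ‖y‖ := norm_pos_iff.mpr hy0
      have hyb : b ≤ ‖y‖ := by
        by_contra hyb
        push_neg at hyb
        have hya : ‖y‖ < a := by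
          rcases lt_or_ge ‖y‖ a with h | h
          · exact h
          · exact absurd ((hmemK y).mpr ⟨h, hyb.le⟩) (hnotK y hyL)
        set k : ℕ := ⌈a / ‖y‖⌉₊ with hk
        have hk1 : 1 ≤ (k : ℝ) := by
          have : 0 < a / ‖y‖ := by positivity
          exact_mod_cast Nat.one_le_ceil_iff.mpr this
        have hz : ((k : ℤ) • y) ∈ L'.1 := Submodule.smul_mem _ _ hyL
        have hznorm : ‖(k : ℤ) • y‖ = (k : ℝ) * ‖y‖ := by
          rw [← Int.cast_smul_eq_zsmul ℝ, norm_smul]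
          simp
        have hge : a ≤ (k : ℝ) * ‖y‖ := by
          have := Nat.le_ceil (a / ‖y‖)
          calc a = (a / ‖y‖) * ‖y‖ := by field_simp
            _ ≤ (k : ℝ) * ‖y‖ := by
                apply mul_le_mul_of_nonneg_right _ (norm_nonneg y)
                exact_mod_cast this
        have hlt : (k : ℝ) * ‖y‖ < a + ‖y‖ := by
          have hceil : (k : ℝ) < a / ‖y‖ + 1 := by
            exact_mod_cast Nat.ceil_lt_add_one (by positivity : (0:ℝ) ≤ a / ‖y‖)
          have := mul_lt_mul_of_pos_right hceil hynorm
          calc (k : ℝ) * ‖y‖ < (a / ‖y‖ + 1) * ‖y‖ := this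
            _ = a + ‖y‖ := by field_simp
        have hle : (k : ℝ) * ‖y‖ ≤ b := by
          have : a + ‖y‖ < a + a := by linarith
          have hb2 : a + a = b := by rw [ha]; ring
          linarith
        exact hnotK _ hz ((hmemK _).mpr ⟨by rw [hznorm]; exact hge, by rw [hznorm]; exact hle⟩)
      calc m - ε / 2 = b ^ 2 := hbsq.symm
        _ ≤ ‖y‖ ^ 2 := pow_le_pow_left₀ hbpos.le hyb 2
    simp only [Set.mem_setOf_eq, Real.dist_eq, abs_lt]
    constructor <;> [linarith; linarith]
end

section
/- Every maximal abelian subgroup of the Heisenberg group H = ℂ × ℝ is of the form ℝz₀ × ℝ for some z₀ ∈ ℂ with z₀ ≠ 0. -/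
open Complex

/-- The Heisenberg group `H = ℂ × ℝ` with multiplication
`(z₁,t₁)(z₂,t₂) = (z₁+z₂, t₁+t₂+½Im(z₁·conj z₂))`. -/
@[ext] structure Heis where
  z : ℂ
  t : ℝ

namespace Heis

noncomputable instance : Group Heis where
  mul a b := ⟨a.z + b.z, a.t + b.t + (a.z * (starRingEnd ℂ) b.z).im / 2⟩
  one := ⟨0, 0⟩
  inv a := ⟨-a.z, -a.t⟩
  mul_assoc a b c := Heis.ext
    (show a.z + b.z + c.z = a.z + (b.z + c.z) by ring)
    (show a.t + b.t + (a.z * (starRingEnd ℂ) b.z).im / 2 + c.t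
          + ((a.z + b.z) * (starRingEnd ℂ) c.z).im / 2
        = a.t + (b.t + c.t + (b.z * (starRingEnd ℂ) c.z).im / 2)
          + (a.z * (starRingEnd ℂ) (b.z + c.z)).im / 2 by
      simp only [map_add, mul_add, add_mul, Complex.add_im]
      ring)
  one_mul a := Heis.ext (show 0 + a.z = a.z by ring)
    (show 0 + a.t + ((0 : ℂ) * (starRingEnd ℂ) a.z).im / 2 = a.t by simp)
  mul_one a := Heis.ext (show a.z + 0 = a.z by ring)
    (show a.t + 0 + (a.z * (starRingEnd ℂ) (0 : ℂ)).im / 2 = a.t by simp)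
  inv_mul_cancel a := Heis.ext (show -a.z + a.z = 0 by ring)
    (show -a.t + a.t + (-a.z * (starRingEnd ℂ) a.z).im / 2 = 0 by
      simp [Complex.mul_im]
      ring)

@[simp] theorem mul_z (a b : Heis) : (a * b).z = a.z + b.z := rfl
@[simp] theorem mul_t (a b : Heis) :
    (a * b).t = a.t + b.t + (a.z * (starRingEnd ℂ) b.z).im / 2 := rfl
@[simp] theorem one_z : (1 : Heis).z = 0 := rfl
@[simp] theorem one_t : (1 : Heis).t = 0 := rfl
@[simp] theorem inv_z (a : Heis) : (a⁻¹).z = -a.z := rfl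
@[simp] theorem inv_t (a : Heis) : (a⁻¹).t = -a.t := rfl

/-- The topology of `H = ℂ × ℝ`. -/
noncomputable instance : TopologicalSpace Heis :=
  TopologicalSpace.induced (fun h => (h.z, h.t)) inferInstance

end Heis


lemma heis_comm_iff (a b : Heis) : a * b = b * a ↔ (a.z * (starRingEnd ℂ) b.z).im = 0 := by
  constructor
  · intro h
    have hz := congrArg Heis.t h
    simp only [Heis.mul_t] at hz
    have him : (a.z * (starRingEnd ℂ) b.z).im = (b.z * (starRingEnd ℂ) a.z).im := by linarith
    have : (b.z * (starRingEnd ℂ) a.z).im = -(a.z * (starRingEnd ℂ) b.z).im := by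
      simp [Complex.mul_im]; ring
    linarith
  · intro h
    have h2 : (b.z * (starRingEnd ℂ) a.z).im = 0 := by
      simp only [Complex.mul_im] at h ⊢
      simp only [Complex.conj_re, Complex.conj_im] at h ⊢
      linarith
    apply Heis.ext
    · simp [add_comm]
    · simp [h, h2]; ring

lemma parallel_of_im_zero {z₀ v : ℂ} (hz : z₀ ≠ 0)
    (h : (z₀ * (starRingEnd ℂ) v).im = 0) : ∃ r : ℝ, v = (r : ℝ) * z₀ := by
  have him : (v * (starRingEnd ℂ) z₀).im = 0 := by
    simp only [Complex.mul_im, Complex.conj_re, Complex.conj_im] at h ⊢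
    linarith
  have hre : v * (starRingEnd ℂ) z₀ = ((v * (starRingEnd ℂ) z₀).re : ℂ) := by
    apply Complex.ext <;> simp [him]
  have hns : (Complex.normSq z₀ : ℂ) ≠ 0 := by
    simpa using (Complex.normSq_pos.2 hz).ne'
  refine ⟨(v * (starRingEnd ℂ) z₀).re / Complex.normSq z₀, ?_⟩
  push_cast
  rw [div_mul_eq_mul_div, ← hre, eq_div_iff hns, ← Complex.mul_conj z₀]
  ring

/-- The line subgroup `ℝ z₀ × ℝ`. -/
noncomputable def heisLine (z₀ : ℂ) : Subgroup Heis where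
  carrier := {h : Heis | ∃ r : ℝ, h.z = (r : ℂ) * z₀}
  mul_mem' := by
    rintro a b ⟨r, hr⟩ ⟨s, hs⟩
    exact ⟨r + s, by simp [hr, hs]; ring⟩
  one_mem' := ⟨0, by simp⟩
  inv_mem' := by
    rintro a ⟨r, hr⟩
    exact ⟨-r, by rw [Heis.inv_z, hr]; push_cast; ring⟩

lemma heisLine_abelian (z₀ : ℂ) :
    ∀ a ∈ heisLine z₀, ∀ b ∈ heisLine z₀, a * b = b * a := by
  rintro a ⟨r, hr⟩ b ⟨s, hs⟩
  rw [heis_comm_iff, hr, hs]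
  have : (r : ℂ) * z₀ * (starRingEnd ℂ) ((s : ℂ) * z₀)
      = ((r * s : ℝ) : ℂ) * (z₀ * (starRingEnd ℂ) z₀) := by
    simp only [map_mul, Complex.conj_ofReal]; push_cast; ring
  rw [this, Complex.mul_conj]
  simp

/-- Every maximal abelian subgroup of the Heisenberg group is of the form `ℝz₀ × ℝ`
for some `z₀ ≠ 0`. -/
theorem heis_maximal_abelian (A : Subgroup Heis)
    (habel : ∀ a ∈ A, ∀ b ∈ A, a * b = b * a)
    (hmax : ∀ B : Subgroup Heis, (∀ a ∈ B, ∀ b ∈ B, a * b = b * a) → A ≤ B → B = A) :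
    ∃ z₀ : ℂ, z₀ ≠ 0 ∧ (A : Set Heis) = {h : Heis | ∃ r : ℝ, h.z = (r : ℂ) * z₀} := by
  have key : ∃ a ∈ A, a.z ≠ 0 := by
    by_contra hc
    push_neg at hc
    have hle : A ≤ heisLine 1 := by
      intro a ha
      exact ⟨0, by simp [hc a ha]⟩
    have := hmax _ (heisLine_abelian 1) hle
    have hmem : (⟨1, 0⟩ : Heis) ∈ A := by
      rw [← this]; exact ⟨1, by simp⟩
    have := hc _ hmem
    simp at this
  obtain ⟨a, haA, haz⟩ := key
  refine ⟨a.z, haz, ?_⟩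
  have hle : A ≤ heisLine a.z := by
    intro b hb
    have := habel a haA b hb
    rw [heis_comm_iff] at this
    exact parallel_of_im_zero haz this
  have := hmax _ (heisLine_abelian a.z) hle
  rw [← this]
  rfl
end

section
/- If C is a closed subgroup of the Heisenberg group H = ℂ × ℝ whose intersection with the center {0} × ℝ is nontrivial (in particular if C is non-abelian), then the projection p(C) = {z : (z,t) ∈ C for some t} is a closed subgroup of ℂ. -/
open Complex

namespace Heis

instance : T2Space Heis := by
  have hemb : Topology.IsEmbedding (fun h : Heis => (h.z, h.t)) :=
    ⟨⟨rfl⟩, fun a b hab =>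
      Heis.ext (congrArg Prod.fst hab) (congrArg Prod.snd hab)⟩
  exact hemb.t2Space

end Heis

namespace Heis

theorem continuous_mk : Continuous (fun p : ℂ × ℝ => (⟨p.1, p.2⟩ : Heis)) :=
  continuous_induced_rng.2 (by exact continuous_id)

theorem shift_mem {C : Subgroup Heis} {z : ℂ} {t s : ℝ}
    (h : (⟨z, t⟩ : Heis) ∈ C) (h0 : (⟨0, s⟩ : Heis) ∈ C) :
    (⟨z, t + s⟩ : Heis) ∈ C := by
  have hmul : ({ z := z, t := t } : Heis) * { z := 0, t := s } = { z := z, t := t + s } := by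
    ext <;> simp
  rw [← hmul]
  exact C.mul_mem h h0

end Heis

/-- If a closed subgroup `C` of the Heisenberg group meets the center `{0} × ℝ`
nontrivially, then its projection `p(C)` to `ℂ` is a closed subgroup of `ℂ`. -/
theorem heis_proj_closed_subgroup (C : Subgroup Heis)
    (hC : IsClosed (C : Set Heis))
    (hcen : ∃ x ∈ C, x ≠ 1 ∧ x.z = 0) :
    ∃ S : AddSubgroup ℂ, (S : Set ℂ) = Heis.z '' (C : Set Heis) ∧
      IsClosed (S : Set ℂ) := by
  classical
  -- the central subgroup T = {t | (0,t) ∈ C}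
  set T : AddSubgroup ℝ :=
    { carrier := {t : ℝ | (⟨0, t⟩ : Heis) ∈ C}
      zero_mem' := by
        have : (1 : Heis) = ⟨0, 0⟩ := rfl
        simpa [this] using C.one_mem
      add_mem' := by
        intro a b ha hb
        exact Heis.shift_mem ha hb
      neg_mem' := by
        intro a ha
        have := C.inv_mem ha
        simpa [Inv.inv] using this } with hT
  have hTmem : ∀ t : ℝ, t ∈ T ↔ (⟨0, t⟩ : Heis) ∈ C := fun t => Iff.rfl
  have hcont0 : Continuous (fun t : ℝ => (⟨0, t⟩ : Heis)) :=
    Heis.continuous_mk.comp (Continuous.prodMk continuous_const continuous_id)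
  have hTclosed : IsClosed (T : Set ℝ) := hC.preimage hcont0
  -- the projection as an additive subgroup
  refine ⟨{ carrier := Heis.z '' (C : Set Heis)
            zero_mem' := ⟨1, C.one_mem, rfl⟩
            add_mem' := ?_
            neg_mem' := ?_ }, rfl, ?_⟩
  · rintro a b ⟨x, hx, rfl⟩ ⟨y, hy, rfl⟩
    exact ⟨x * y, C.mul_mem hx hy, rfl⟩
  · rintro a ⟨x, hx, rfl⟩
    exact ⟨x⁻¹, C.inv_mem hx, rfl⟩
  -- closedness via sequences
  apply IsSeqClosed.isClosed
  intro u z hu huz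
  choose t ht hz using hu
  -- key step: find bounded replacement times
  have key : ∃ (s : ℕ → ℝ) (b : ℝ) (φ : ℕ → ℕ), StrictMono φ ∧
      (∀ n, (⟨u n, s n⟩ : Heis) ∈ C) ∧
      Filter.Tendsto (s ∘ φ) Filter.atTop (nhds b) := by
    rcases T.dense_or_cyclic with hdense | ⟨a, ha⟩
    · -- dense hence all of ℝ
      have hTtop : ∀ r : ℝ, r ∈ T := by
        intro r
        have := hTclosed.closure_eq
        have : r ∈ closure (T : Set ℝ) := hdense r
        rwa [hTclosed.closure_eq] at this
      refine ⟨fun _ => 0, 0, id, strictMono_id, ?_, tendsto_const_nhds⟩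
      intro n
      have h1 : (⟨(t n).z, (t n).t + (-(t n).t)⟩ : Heis) ∈ C := by
        refine Heis.shift_mem ?_ (hTtop _)
        simpa using ht n
      simp only [add_neg_cancel] at h1
      rw [hz n] at h1
      exact h1
    · -- cyclic: T = zmultiples a, a ≠ 0 since T nontrivial
      have ha' : a ≠ 0 := by
        rintro rfl
        obtain ⟨x, hxC, hx1, hxz⟩ := hcen
        have hxT : x.t ∈ T := by
          rw [hTmem]
          have : (⟨0, x.t⟩ : Heis) = x := by
            ext <;> simp [hxz]
          rwa [this]
        rw [ha, AddSubgroup.mem_closure_singleton] at hxT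
        obtain ⟨n, hn⟩ := hxT
        simp at hn
        exact hx1 (by ext <;> simp [hxz, ← hn])
      set s : ℕ → ℝ := fun n => a * Int.fract ((t n).t / a) with hs
      have hmemC : ∀ n, (⟨u n, s n⟩ : Heis) ∈ C := by
        intro n
        have hdiff : (s n - (t n).t) ∈ T := by
          rw [ha, AddSubgroup.mem_closure_singleton]
          refine ⟨-⌊(t n).t / a⌋, ?_⟩
          have heq : s n - (t n).t = -(a * ⌊(t n).t / a⌋) := by
            rw [hs]
            simp only [Int.fract]
            field_simp
            ring
          rw [heq, zsmul_eq_mul]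
          push_cast
          ring
        have h1 : (⟨(t n).z, (t n).t + (s n - (t n).t)⟩ : Heis) ∈ C := by
          refine Heis.shift_mem ?_ hdiff
          simpa using ht n
        simp only [add_sub_cancel] at h1
        rw [hz n] at h1
        exact h1
      have hbound : ∀ n, s n ∈ Set.Icc (-|a|) |a| := by
        intro n
        have h0 := Int.fract_nonneg ((t n).t / a)
        have h1 := (Int.fract_lt_one ((t n).t / a)).le
        constructor
        · calc -|a| ≤ -|s n| := by
                rw [hs]
                simp only [neg_le_neg_iff, abs_mul]
                calc |a| * |Int.fract ((t n).t / a)| ≤ |a| * 1 := by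
                      apply mul_le_mul_of_nonneg_left _ (abs_nonneg a)
                      rw [_root_.abs_of_nonneg h0]; exact h1
                  _ = |a| := mul_one _
          _ ≤ s n := neg_abs_le _
        · calc s n ≤ |s n| := le_abs_self _
            _ ≤ |a| := by
                rw [hs, abs_mul]
                calc |a| * |Int.fract ((t n).t / a)| ≤ |a| * 1 := by
                      apply mul_le_mul_of_nonneg_left _ (abs_nonneg a)
                      rw [_root_.abs_of_nonneg h0]; exact h1
                  _ = |a| := mul_one _
      obtain ⟨b, _, φ, hφ, hconv⟩ :=
        tendsto_subseq_of_bounded (Metric.isBounded_Icc (-|a|) |a|) hbound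
      exact ⟨s, b, φ, hφ, hmemC, hconv⟩
  obtain ⟨s, b, φ, hφ, hmemC, hconv⟩ := key
  have huφ : Filter.Tendsto (u ∘ φ) Filter.atTop (nhds z) :=
    huz.comp hφ.tendsto_atTop
  have hHeis : Filter.Tendsto (fun n => (⟨u (φ n), s (φ n)⟩ : Heis))
      Filter.atTop (nhds (⟨z, b⟩ : Heis)) :=
    (Heis.continuous_mk.tendsto (z, b)).comp (huφ.prodMk_nhds hconv)
  have hmem : (⟨z, b⟩ : Heis) ∈ C :=
    hC.mem_of_tendsto hHeis (Filter.Eventually.of_forall fun n => hmemC (φ n))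
  exact ⟨⟨z, b⟩, hmem, rfl⟩
end
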